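/- arXiv:2209.13854 — 4 statements merged into one kernel-verified Lean document; each statement's English description precedes it below -/
import Mathlib

section
/- For every complex number z, |sin(|z|)| ≤ |sin(z)| ≤ sinh(|z|). -/
/-!
Write `z = x + iy` and `r = |z|`, so that `|sin z|² = sin² x + sinh² y`. The factorisations
`sin² r - sin² x = sin (r + x) sin (r - x)` and `sinh² r - sinh² y = sinh (r + y) sinh (r - y)`,
together with `(r + x)(r - x) = y²` and `(r + y)(r - y) = x²`, reduce both bounds to the
elementary inequalities `|sin t| ≤ |t|` and `t ≤ sinh t` for `t ≥ 0`.
-/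

namespace Real

theorem sin_sq_sub_sin_sq (x y : ℝ) : sin x ^ 2 - sin y ^ 2 = sin (x + y) * sin (x - y) := by
  rw [sin_add, sin_sub]
  linear_combination sin y ^ 2 * sin_sq_add_cos_sq x - sin x ^ 2 * sin_sq_add_cos_sq y

theorem sinh_sq_sub_sinh_sq (x y : ℝ) :
    sinh x ^ 2 - sinh y ^ 2 = sinh (x + y) * sinh (x - y) := by
  rw [sinh_add, sinh_sub]
  linear_combination sinh y ^ 2 * cosh_sq x - sinh x ^ 2 * cosh_sq y

theorem abs_sin_mul_sin_le (x y : ℝ) : |sin x * sin y| ≤ |x * y| := by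
  rw [abs_mul, abs_mul]
  exact mul_le_mul abs_sin_le_abs abs_sin_le_abs (abs_nonneg _) (abs_nonneg _)

theorem mul_le_sinh_mul_sinh {x y : ℝ} (hx : 0 ≤ x) (hy : 0 ≤ y) :
    x * y ≤ sinh x * sinh y :=
  mul_le_mul (self_le_sinh_iff.2 hx) (self_le_sinh_iff.2 hy) hy (sinh_nonneg_iff.2 hx)

theorem sq_le_sinh_sq (x : ℝ) : x ^ 2 ≤ sinh x ^ 2 := by
  rw [sq_le_sq, abs_sinh]
  exact self_le_sinh_iff.2 (abs_nonneg x)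

end Real

namespace Complex

theorem norm_sin_sq (z : ℂ) : ‖sin z‖ ^ 2 = Real.sin z.re ^ 2 + Real.sinh z.im ^ 2 := by
  rw [sin_eq, ← ofReal_sin, ← ofReal_cosh, ← ofReal_cos, ← ofReal_sinh, ← ofReal_mul,
    ← ofReal_mul, Complex.sq_norm, normSq_add_mul_I]
  linear_combination Real.sin z.re ^ 2 * Real.cosh_sq z.im
    + Real.sinh z.im ^ 2 * Real.sin_sq_add_cos_sq z.re

theorem sq_norm_eq_re_sq_add_im_sq (z : ℂ) : ‖z‖ ^ 2 = z.re ^ 2 + z.im ^ 2 := by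
  rw [Complex.sq_norm, normSq_apply, sq, sq]

theorem sin_norm_sq_le_norm_sin_sq (z : ℂ) : Real.sin ‖z‖ ^ 2 ≤ ‖sin z‖ ^ 2 := by
  have hnorm := sq_norm_eq_re_sq_add_im_sq z
  have hsin : Real.sin ‖z‖ ^ 2 - Real.sin z.re ^ 2 ≤ Real.sinh z.im ^ 2 :=
    calc Real.sin ‖z‖ ^ 2 - Real.sin z.re ^ 2
        = Real.sin (‖z‖ + z.re) * Real.sin (‖z‖ - z.re) := Real.sin_sq_sub_sin_sq _ _
      _ ≤ |(‖z‖ + z.re) * (‖z‖ - z.re)| := (le_abs_self _).trans (Real.abs_sin_mul_sin_le _ _)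
      _ = z.im ^ 2 := by rw [← sq_abs z.im, ← abs_pow]; congr 1; linear_combination hnorm
      _ ≤ Real.sinh z.im ^ 2 := Real.sq_le_sinh_sq _
  linarith [norm_sin_sq z]

theorem norm_sin_sq_le_sinh_norm_sq (z : ℂ) : ‖sin z‖ ^ 2 ≤ Real.sinh ‖z‖ ^ 2 := by
  have hnorm := sq_norm_eq_re_sq_add_im_sq z
  have him := abs_le.1 (abs_im_le_norm z)
  have hsinh : Real.sin z.re ^ 2 ≤ Real.sinh ‖z‖ ^ 2 - Real.sinh z.im ^ 2 :=
    calc Real.sin z.re ^ 2 ≤ z.re ^ 2 := Real.sin_sq_le_sq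
      _ = (‖z‖ + z.im) * (‖z‖ - z.im) := by linear_combination -hnorm
      _ ≤ Real.sinh (‖z‖ + z.im) * Real.sinh (‖z‖ - z.im) :=
        Real.mul_le_sinh_mul_sinh (by linarith) (by linarith)
      _ = Real.sinh ‖z‖ ^ 2 - Real.sinh z.im ^ 2 := (Real.sinh_sq_sub_sinh_sq _ _).symm
  linarith [norm_sin_sq z]

end Complex

/-- For every complex number `z`, `|sin(|z|)| ≤ |sin z| ≤ sinh(|z|)`. -/
theorem abs_sin_le_abs_complex_sin_le_sinh (z : ℂ) :
    |Real.sin ‖z‖| ≤ ‖Complex.sin z‖ ∧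
      ‖Complex.sin z‖ ≤ Real.sinh ‖z‖ :=
  ⟨abs_le_of_sq_le_sq (Complex.sin_norm_sq_le_norm_sin_sq z) (norm_nonneg _),
    (sq_le_sq₀ (norm_nonneg _) (Real.sinh_nonneg_iff.2 (norm_nonneg z))).1
      (Complex.norm_sin_sq_le_sinh_norm_sq z)⟩
end

section
/- For real σ > 1 and τ, and σ' with σ' = σ, we have |Γ(σ + iτ)|² ≥ Γ(σ)² · |π τ / sin(π i τ)|, i.e. |Γ(σ+iτ)|² ≥ Γ(σ)² · (π τ / sinh(π τ)) for τ ≠ 0 (and trivially equality at τ = 0). -/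
/-!
Euler's product gives `|Γ(σ + iτ) / Γ(σ)|² = ∏_{k ≥ 0} (k + σ)² / ((k + σ)² + τ²)`, and
every factor increases with `σ`, so `|Γ(σ + iτ)|² / Γ(σ)²` is increasing in `σ > 0`.
At `σ = 1` the reflection formula `Γ(iτ) Γ(1 - iτ) = π / sin(πiτ)` evaluates it to
`πτ / sinh(πτ)`.
-/

open Real Complex Filter Finset Topology ComplexConjugate

lemma sq_div_sq_add_sq_le_of_le {a b : ℝ} (c : ℝ) (ha : 0 < a) (hab : a ≤ b) :
    a ^ 2 / (a ^ 2 + c ^ 2) ≤ b ^ 2 / (b ^ 2 + c ^ 2) := by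
  have hb : 0 < b := ha.trans_le hab
  rw [div_le_div_iff₀ (by positivity) (by positivity)]
  have hsq : a ^ 2 ≤ b ^ 2 := pow_le_pow_left₀ ha.le hab 2
  nlinarith [mul_le_mul_of_nonneg_left hsq (sq_nonneg c)]

lemma norm_GammaSeq_add_mul_I_sq {s : ℝ} (hs : 0 < s) (τ : ℝ) {n : ℕ} (hn : n ≠ 0) :
    ‖Complex.GammaSeq (s + τ * I) n‖ ^ 2 =
      Real.GammaSeq s n ^ 2 * ∏ j ∈ range (n + 1), (s + j) ^ 2 / ((s + j) ^ 2 + τ ^ 2) := by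
  have hfactor (j : ℕ) : ‖(s : ℂ) + τ * I + j‖ ^ 2 = (s + j) ^ 2 + τ ^ 2 := by
    rw [Complex.sq_norm,
      show (s : ℂ) + τ * I + j = ((s + j : ℝ) : ℂ) + τ * I by push_cast; ring, normSq_add_mul_I]
  have hcpow : ‖(n : ℂ) ^ ((s : ℂ) + τ * I)‖ = (n : ℝ) ^ s := by
    rw [← ofReal_natCast, norm_cpow_eq_rpow_re_of_pos (by positivity)]
    simp
  have hprod : 0 < ∏ j ∈ range (n + 1), (s + j) := prod_pos fun j _ => by positivity
  have hprod' : 0 < ∏ j ∈ range (n + 1), ((s + j) ^ 2 + τ ^ 2) :=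
    prod_pos fun j _ => by positivity
  rw [Complex.GammaSeq, Real.GammaSeq, norm_div, norm_mul, hcpow, norm_prod, div_pow, mul_pow,
    ← prod_pow]
  simp_rw [hfactor]
  rw [Complex.norm_natCast, prod_div_distrib, prod_pow, div_pow, mul_pow]
  field_simp

lemma GammaSeq_sq_mul_norm_GammaSeq_sq_le {s σ : ℝ} (hs : 0 < s) (hsσ : s ≤ σ) (τ : ℝ)
    {n : ℕ} (hn : n ≠ 0) :
    Real.GammaSeq σ n ^ 2 * ‖Complex.GammaSeq (s + τ * I) n‖ ^ 2 ≤
      ‖Complex.GammaSeq (σ + τ * I) n‖ ^ 2 * Real.GammaSeq s n ^ 2 := by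
  have hσ : 0 < σ := hs.trans_le hsσ
  have hprod : ∏ j ∈ range (n + 1), (s + j) ^ 2 / ((s + j) ^ 2 + τ ^ 2) ≤
      ∏ j ∈ range (n + 1), (σ + j) ^ 2 / ((σ + j) ^ 2 + τ ^ 2) :=
    prod_le_prod (fun j _ => by positivity)
      fun j _ => sq_div_sq_add_sq_le_of_le τ (by positivity) (by linarith)
  rw [norm_GammaSeq_add_mul_I_sq hs τ hn, norm_GammaSeq_add_mul_I_sq hσ τ hn]
  calc Real.GammaSeq σ n ^ 2 * (Real.GammaSeq s n ^ 2 *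
        ∏ j ∈ range (n + 1), (s + j) ^ 2 / ((s + j) ^ 2 + τ ^ 2))
      ≤ Real.GammaSeq σ n ^ 2 * (Real.GammaSeq s n ^ 2 *
        ∏ j ∈ range (n + 1), (σ + j) ^ 2 / ((σ + j) ^ 2 + τ ^ 2)) := by gcongr
    _ = _ := by ring

lemma Gamma_sq_mul_norm_Gamma_sq_le {s σ : ℝ} (hs : 0 < s) (hsσ : s ≤ σ) (τ : ℝ) :
    Real.Gamma σ ^ 2 * ‖Complex.Gamma (s + τ * I)‖ ^ 2 ≤
      ‖Complex.Gamma (σ + τ * I)‖ ^ 2 * Real.Gamma s ^ 2 := by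
  have hnorm (z : ℂ) :
      Tendsto (fun n => ‖Complex.GammaSeq z n‖ ^ 2) atTop (𝓝 (‖Complex.Gamma z‖ ^ 2)) :=
    ((continuous_norm.tendsto _).comp (Complex.GammaSeq_tendsto_Gamma z)).pow 2
  refine le_of_tendsto_of_tendsto (((Real.GammaSeq_tendsto_Gamma σ).pow 2).mul (hnorm _))
    ((hnorm _).mul ((Real.GammaSeq_tendsto_Gamma s).pow 2)) ?_
  filter_upwards [eventually_ne_atTop 0] with n hn
  exact GammaSeq_sq_mul_norm_GammaSeq_sq_le hs hsσ τ hn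

lemma norm_Gamma_one_add_mul_I_sq {τ : ℝ} (hτ : τ ≠ 0) :
    ‖Complex.Gamma (1 + τ * I)‖ ^ 2 = π * τ / Real.sinh (π * τ) := by
  have hτI : (τ : ℂ) * I ≠ 0 := mul_ne_zero (ofReal_ne_zero.mpr hτ) I_ne_zero
  have hsinh : Real.sinh (π * τ) ≠ 0 := Real.sinh_ne_zero.mpr (mul_ne_zero pi_ne_zero hτ)
  have hsin : Complex.sin (π * (τ * I)) = Real.sinh (π * τ) * I := by
    rw [← mul_assoc, ← ofReal_mul, sin_mul_I, ofReal_sinh]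
  have hconj : Complex.Gamma (1 - τ * I) = conj (Complex.Gamma (1 + τ * I)) := by
    rw [← Complex.Gamma_conj, map_add, map_one, map_mul, conj_ofReal, conj_I, mul_neg,
      sub_eq_add_neg]
  -- `Γ(1 + iτ) = iτ Γ(iτ)`, so `|Γ(1 + iτ)|² = iτ · Γ(iτ) Γ(1 - iτ)`: the reflection formula.
  have hmul : Complex.Gamma (1 + τ * I) * conj (Complex.Gamma (1 + τ * I)) =
      ((π * τ / Real.sinh (π * τ) : ℝ) : ℂ) := by
    rw [← hconj, add_comm 1, Complex.Gamma_add_one _ hτI, mul_assoc,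
      Complex.Gamma_mul_Gamma_one_sub, hsin]
    push_cast
    field_simp
  rw [mul_conj, ← Complex.sq_norm] at hmul
  exact_mod_cast hmul

/-- For real `σ > 1` and `τ ≠ 0`,
`|Γ(σ + iτ)|² ≥ Γ(σ)² · (πτ / sinh(πτ))`
(the right-hand side being `Γ(σ)² · |πτ / sin(πiτ)|`). -/
theorem abs_Gamma_sq_ge (σ τ : ℝ) (hσ : 1 < σ) (hτ : τ ≠ 0) :
    Real.Gamma σ ^ 2 * (Real.pi * τ / Real.sinh (Real.pi * τ)) ≤
      ‖Complex.Gamma (σ + τ * Complex.I)‖ ^ 2 := by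
  have h := Gamma_sq_mul_norm_Gamma_sq_le one_pos hσ.le τ
  rwa [Complex.ofReal_one, norm_Gamma_one_add_mul_I_sq hτ, Real.Gamma_one, one_pow,
    mul_one] at h
end

section
/- For s = σ + iτ complex with σ < 0 and s not an integer, |Γ_ℂ(1-s)/Γ_ℂ(s)|^{1/2} ≥ ((2π)^{σ - 1/2} / √π) · Γ(1-σ) · tanh(π|τ|)^{1/2}, where Γ_ℂ(s) = 2(2π)^{-s} Γ(s). -/
/-! By the reflection formula, `|Γ_ℂ(1-s)/Γ_ℂ(s)| = (2π)^{2σ-1} |Γ(1-s)|² |sin πs| / π`.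
Euler's limit formula shows that `|Γ(x+iτ)| / Γ(x)` is nondecreasing in `x > 0`, and at `x = 1/2`
the reflection formula gives `|Γ(1/2+iτ)|² = π / cosh πτ`; hence
`|Γ(1-s)|² ≥ Γ(1-σ)² / cosh πτ` for `σ ≤ 1/2`. Combined with `|sin πs| ≥ sinh π|τ|` this is the
bound. -/

open Real Complex

/-- `Γ_ℝ(s) = π^{-s/2} Γ(s/2)`. -/
noncomputable def GammaR (s : ℂ) : ℂ := (Real.pi : ℂ) ^ (-s / 2) * Complex.Gamma (s / 2)

/-- `Γ_ℂ(s) = 2 (2π)^{-s} Γ(s)`. -/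
noncomputable def GammaC (s : ℂ) : ℂ := 2 * (2 * Real.pi : ℂ) ^ (-s) * Complex.Gamma s

/-- `γ_ℝ(s) = |Γ_ℝ(1-s)/Γ_ℝ(s)|`. -/
noncomputable def gammaRFactor (s : ℂ) : ℝ := ‖GammaR (1 - s) / GammaR s‖

/-- `γ_ℂ(s) = |Γ_ℂ(1-s)/Γ_ℂ(s)|^{1/2}`. -/
noncomputable def gammaCFactor (s : ℂ) : ℝ := Real.sqrt ‖GammaC (1 - s) / GammaC s‖

/-- `Γ_m(s) = min {γ_ℝ(s), γ_ℂ(s)}`. -/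
noncomputable def GammaMin (s : ℂ) : ℝ := min (gammaRFactor s) (gammaCFactor s)

open Filter Topology

namespace Complex

lemma sinh_abs_im_le_norm_sin (z : ℂ) : Real.sinh |z.im| ≤ ‖sin z‖ := by
  have hz : sin z =
      (Real.sin z.re * Real.cosh z.im : ℝ) + (Real.cos z.re * Real.sinh z.im : ℝ) * I := by
    conv_lhs => rw [← re_add_im z]
    rw [sin_add_mul_I, ← ofReal_sin, ← ofReal_cos, ← ofReal_cosh, ← ofReal_sinh]
    push_cast
    ring
  have hsq : ‖sin z‖ ^ 2 = Real.sin z.re ^ 2 + Real.sinh z.im ^ 2 := by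
    rw [← normSq_eq_norm_sq, hz, normSq_add_mul_I]
    linear_combination
      Real.sin z.re ^ 2 * Real.cosh_sq z.im + Real.sinh z.im ^ 2 * Real.sin_sq_add_cos_sq z.re
  refine (pow_le_pow_iff_left₀ (by positivity) (norm_nonneg _) two_ne_zero).1 ?_
  rw [hsq, ← Real.abs_sinh, sq_abs]
  linarith [sq_nonneg (Real.sin z.re)]

lemma norm_Gamma_one_half_add_mul_I_sq (τ : ℝ) :
    ‖Gamma (1 / 2 + τ * I)‖ ^ 2 = π / Real.cosh (π * τ) := by
  have h := Gamma_mul_Gamma_one_sub (1 / 2 + τ * I)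
  have hconj : 1 - (1 / 2 + τ * I) = (starRingEnd ℂ) (1 / 2 + τ * I) := by
    apply Complex.ext <;> norm_num
  have hsin : sin (π * (1 / 2 + τ * I)) = Real.cosh (π * τ) := by
    rw [show (π : ℂ) * (1 / 2 + τ * I) = π / 2 + (π * τ : ℝ) * I by push_cast; ring,
      sin_add_mul_I, sin_pi_div_two, cos_pi_div_two, ofReal_cosh]
    ring
  rw [hconj, Gamma_conj, mul_conj, hsin, ← ofReal_div] at h
  rw [← normSq_eq_norm_sq]
  exact_mod_cast h

lemma norm_GammaSeq {n : ℕ} (hn : n ≠ 0) (s : ℂ) :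
    ‖GammaSeq s n‖ = n ^ s.re * n.factorial / ∏ j ∈ Finset.range (n + 1), ‖s + j‖ := by
  rw [GammaSeq, norm_div, norm_mul, norm_prod, norm_natCast_cpow_of_pos (Nat.pos_of_ne_zero hn),
    norm_natCast]

lemma norm_add_mul_I_mul_le {x y : ℝ} (τ : ℝ) (hx : 0 < x) (hxy : x ≤ y) :
    ‖(y + τ * I : ℂ)‖ * x ≤ ‖(x + τ * I : ℂ)‖ * y := by
  refine (pow_le_pow_iff_left₀ (by positivity)
    (mul_nonneg (norm_nonneg _) (hx.le.trans hxy)) two_ne_zero).1 ?_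
  rw [mul_pow, mul_pow, ← normSq_eq_norm_sq, ← normSq_eq_norm_sq, normSq_add_mul_I,
    normSq_add_mul_I]
  nlinarith [mul_le_mul hxy hxy hx.le (hx.trans_le hxy).le, sq_nonneg τ]

lemma norm_GammaSeq_mul_le {a b : ℝ} (τ : ℝ) (ha : 0 < a) (hab : a ≤ b) {n : ℕ} (hn : n ≠ 0) :
    ‖GammaSeq (a + τ * I) n‖ * ‖GammaSeq b n‖ ≤ ‖GammaSeq (b + τ * I) n‖ * ‖GammaSeq a n‖ := by
  have hshift (x : ℝ) (j : ℕ) : (x + τ * I : ℂ) + j = (x + j : ℝ) + τ * I := by push_cast; ring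
  have hreal (x : ℝ) (j : ℕ) (hx : 0 < x) : ‖(x : ℂ) + j‖ = x + j := by
    rw [← ofReal_natCast, ← ofReal_add, norm_real, Real.norm_of_nonneg (by positivity)]
  have hpos (x : ℝ) (j : ℕ) (hx : 0 < x) : 0 < ‖(x + j : ℝ) + τ * I‖ := by
    rw [norm_add_mul_I]
    positivity
  simp only [norm_GammaSeq hn, add_re, ofReal_re, mul_re, I_re, I_im, ofReal_im, mul_zero,
    mul_one, sub_zero, add_zero, hshift]
  simp only [hreal a _ ha, hreal b _ (ha.trans_le hab)]
  rw [div_mul_div_comm, div_mul_div_comm, mul_comm (_ ^ b * _)]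
  refine div_le_div_of_nonneg_left (by positivity)
    (mul_pos (Finset.prod_pos fun j _ => hpos b j (ha.trans_le hab))
      (Finset.prod_pos fun j _ => by positivity)) ?_
  rw [← Finset.prod_mul_distrib, ← Finset.prod_mul_distrib]
  exact Finset.prod_le_prod (fun j _ => by positivity)
    fun j _ => norm_add_mul_I_mul_le τ (by positivity) (by linarith)

lemma norm_Gamma_mul_Gamma_le {a b : ℝ} (τ : ℝ) (ha : 0 < a) (hab : a ≤ b) :
    ‖Gamma (a + τ * I)‖ * Real.Gamma b ≤ ‖Gamma (b + τ * I)‖ * Real.Gamma a := by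
  have hlim (s t : ℂ) : Tendsto (fun n => ‖GammaSeq s n‖ * ‖GammaSeq t n‖) atTop
      (𝓝 (‖Gamma s‖ * ‖Gamma t‖)) :=
    (GammaSeq_tendsto_Gamma s).norm.mul (GammaSeq_tendsto_Gamma t).norm
  have h := le_of_tendsto_of_tendsto (hlim _ _) (hlim _ _)
    (eventually_atTop.2 ⟨1, fun n hn => norm_GammaSeq_mul_le τ ha hab (by omega)⟩)
  rwa [Gamma_ofReal, Gamma_ofReal, norm_real, norm_real,
    Real.norm_of_nonneg (Real.Gamma_pos_of_pos (ha.trans_le hab)).le,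
    Real.norm_of_nonneg (Real.Gamma_pos_of_pos ha).le] at h

lemma Gamma_sq_le_norm_Gamma_sq_mul_cosh {σ : ℝ} (τ : ℝ) (hσ : 1 / 2 ≤ σ) :
    Real.Gamma σ ^ 2 ≤ ‖Gamma (σ + τ * I)‖ ^ 2 * Real.cosh (π * τ) := by
  have h := pow_le_pow_left₀ (by positivity)
    (norm_Gamma_mul_Gamma_le τ (by norm_num : (0 : ℝ) < 1 / 2) hσ) 2
  rw [Real.Gamma_one_half_eq, mul_pow, mul_pow, Real.sq_sqrt pi_pos.le,
    show ((1 / 2 : ℝ) : ℂ) = 1 / 2 by push_cast; ring, norm_Gamma_one_half_add_mul_I_sq,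
    div_mul_eq_mul_div, div_le_iff₀ (Real.cosh_pos _)] at h
  nlinarith [pi_pos]

lemma Gamma_one_sub_re_sq_mul_tanh_le {s : ℂ} (hs : s.re ≤ 1 / 2) :
    Real.Gamma (1 - s.re) ^ 2 * Real.tanh (π * |s.im|) ≤ ‖Gamma (1 - s)‖ ^ 2 * ‖sin (π * s)‖ := by
  have hGamma : Real.Gamma (1 - s.re) ^ 2 ≤ ‖Gamma (1 - s)‖ ^ 2 * Real.cosh (π * s.im) := by
    have h := Gamma_sq_le_norm_Gamma_sq_mul_cosh (-s.im) (by linarith : 1 / 2 ≤ 1 - s.re)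
    rwa [mul_neg, Real.cosh_neg, show ((1 - s.re : ℝ) : ℂ) + (-s.im : ℝ) * I = 1 - s by
      conv_rhs => rw [← re_add_im s]
      push_cast; ring] at h
  have hsin : Real.sinh (π * |s.im|) ≤ ‖sin (π * s)‖ := by
    simpa [abs_mul, abs_of_pos pi_pos] using sinh_abs_im_le_norm_sin (π * s)
  have hcosh := Real.cosh_pos (π * s.im)
  calc Real.Gamma (1 - s.re) ^ 2 * Real.tanh (π * |s.im|)
      = Real.Gamma (1 - s.re) ^ 2 / Real.cosh (π * s.im) * Real.sinh (π * |s.im|) := by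
        rw [Real.tanh_eq_sinh_div_cosh, ← Real.cosh_abs (π * s.im), abs_mul, abs_of_pos pi_pos]
        ring
    _ ≤ ‖Gamma (1 - s)‖ ^ 2 * ‖sin (π * s)‖ :=
        mul_le_mul ((div_le_iff₀ hcosh).2 hGamma) hsin
          (Real.sinh_nonneg_iff.2 (by positivity)) (sq_nonneg _)

/-- Both sides vanish when `s` or `1 - s` is a pole of `Γ`. -/
lemma norm_Gamma_one_sub_div_norm_Gamma (s : ℂ) :
    ‖Gamma (1 - s)‖ / ‖Gamma s‖ = ‖Gamma (1 - s)‖ ^ 2 * ‖sin (π * s)‖ / π := by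
  have h := congrArg norm (Gamma_mul_Gamma_one_sub s)
  rw [norm_mul, norm_div, norm_real, Real.norm_of_nonneg pi_pos.le] at h
  rcases eq_or_ne ‖Gamma s‖ 0 with hΓ | hΓ
  · rw [hΓ, zero_mul, eq_comm, div_eq_zero_iff] at h
    simp [hΓ, h.resolve_left pi_ne_zero]
  rcases eq_or_ne ‖sin (π * s)‖ 0 with hsin | hsin
  · rw [hsin, div_zero, mul_eq_zero] at h
    simp [h.resolve_left hΓ]
  rw [eq_div_iff hsin] at h
  rw [div_eq_div_iff hΓ pi_ne_zero]
  linear_combination -‖Gamma (1 - s)‖ * h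

lemma norm_GammaC (z : ℂ) : ‖GammaC z‖ = 2 * (2 * π) ^ (-z.re) * ‖Gamma z‖ := by
  rw [GammaC, norm_mul, norm_mul, norm_ofNat, ← ofReal_ofNat, ← ofReal_mul,
    norm_cpow_eq_rpow_re_of_pos (by positivity), neg_re]

lemma norm_GammaC_one_sub_div_GammaC (s : ℂ) :
    ‖GammaC (1 - s) / GammaC s‖
      = (2 * π) ^ (2 * s.re - 1) * ‖Gamma (1 - s)‖ ^ 2 * ‖sin (π * s)‖ / π := by
  rw [norm_div, norm_GammaC, norm_GammaC, sub_re, one_re, mul_div_mul_comm,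
    mul_div_mul_left _ _ two_ne_zero,
    ← Real.rpow_sub (by positivity), norm_Gamma_one_sub_div_norm_Gamma,
    show -(1 - s.re) - -s.re = 2 * s.re - 1 by ring]
  ring

end Complex

theorem gammaCFactor_lower_bound_general (σ τ : ℝ) (hσ : σ < 0) :
    (2 * Real.pi) ^ (σ - 1/2) / Real.sqrt Real.pi * Real.Gamma (1 - σ) *
        Real.sqrt (Real.tanh (Real.pi * |τ|)) ≤
      gammaCFactor (σ + τ * Complex.I) := by
  set s : ℂ := σ + τ * I
  have hre : s.re = σ := by simp [s]
  have him : s.im = τ := by simp [s]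
  have hbound := Complex.Gamma_one_sub_re_sq_mul_tanh_le (s := s) (by linarith)
  rw [hre, him] at hbound
  have htanh : 0 ≤ Real.tanh (π * |τ|) := by
    rw [Real.tanh_eq_sinh_div_cosh]
    exact div_nonneg (Real.sinh_nonneg_iff.2 (by positivity)) (Real.cosh_pos _).le
  rw [gammaCFactor, Complex.norm_GammaC_one_sub_div_GammaC, hre]
  apply Real.le_sqrt_of_sq_le
  calc ((2 * π) ^ (σ - 1 / 2) / √π * Real.Gamma (1 - σ) * √(Real.tanh (π * |τ|))) ^ 2
      = (2 * π) ^ (2 * σ - 1) * (Real.Gamma (1 - σ) ^ 2 * Real.tanh (π * |τ|)) / π := by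
        rw [mul_pow, mul_pow, div_pow, Real.sq_sqrt pi_pos.le, Real.sq_sqrt htanh,
          ← Real.rpow_natCast, ← Real.rpow_mul (by positivity), Nat.cast_ofNat,
          show (σ - 1 / 2) * 2 = 2 * σ - 1 by ring]
        ring
    _ ≤ (2 * π) ^ (2 * σ - 1) * (‖Complex.Gamma (1 - s)‖ ^ 2 * ‖Complex.sin (π * s)‖) / π := by
        gcongr
    _ = _ := by ring

/-- For `s = σ + iτ` with `σ < 0` and `s` not an integer,
`γ_ℂ(s) ≥ (2π)^{σ-1/2}/√π · Γ(1-σ) · tanh(π|τ|)^{1/2}`. -/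
theorem gammaCFactor_lower_bound (σ τ : ℝ) (hσ : σ < 0)
    (hs : ∀ n : ℤ, (σ + τ * Complex.I : ℂ) ≠ (n : ℂ)) :
    (2 * Real.pi) ^ (σ - 1/2) / Real.sqrt Real.pi * Real.Gamma (1 - σ) *
        Real.sqrt (Real.tanh (Real.pi * |τ|)) ≤
      gammaCFactor (σ + τ * Complex.I) :=
  gammaCFactor_lower_bound_general σ τ hσ
end

section
/- For fixed real σ ≤ 1/2, the function τ ↦ |Γ(1 - σ - iτ)|² / |Γ(σ + iτ)|² is nondecreasing on [0, ∞). -/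
/-!
Euler's limit formula `Γ(s) = lim n^s n! / ∏_{j ≤ n} (s + j)` exhibits the ratio as the limit of
`n^(2(1-2σ)) ∏_{j ≤ n} ((σ + j)² + τ²) / ((1 - σ + j)² + τ²)`; the sign of `τ` in `1 - σ - iτ`
disappears in the moduli. For `σ ≤ 1/2` we have `|σ + j| ≤ 1 - σ + j`, and `(a + τ²) / (b + τ²)`
is nondecreasing in `τ ≥ 0` when `a ≤ b`, so every approximant is monotone, hence so is the limit.
-/

open Real Complex Filter Finset Set
open scoped Nat

lemma monotoneOn_add_sq_div_add_sq {a b : ℝ} (hb : 0 < b) (hab : a ≤ b) :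
    MonotoneOn (fun τ : ℝ => (a + τ ^ 2) / (b + τ ^ 2)) (Ici 0) := by
  intro τ₁ h₁ τ₂ _ h₁₂
  have hτ : τ₁ ^ 2 ≤ τ₂ ^ 2 := pow_le_pow_left₀ h₁ h₁₂ 2
  rw [div_le_div_iff₀ (by positivity) (by positivity)]
  nlinarith

namespace Complex

lemma sq_norm_GammaSeq_add_mul_I (x y : ℝ) {n : ℕ} (hn : 0 < n) :
    ‖GammaSeq (x + y * I) n‖ ^ 2 =
      ((n : ℝ) ^ x * n !) ^ 2 / ∏ j ∈ range (n + 1), ((x + j) ^ 2 + y ^ 2) := by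
  have hfactor (j : ℕ) : ‖(x + y * I : ℂ) + j‖ ^ 2 = (x + j) ^ 2 + y ^ 2 := by
    rw [show (x + y * I : ℂ) + j = ((x + j : ℝ) : ℂ) + y * I by push_cast; ring, Complex.sq_norm,
      normSq_add_mul_I]
  rw [GammaSeq, norm_div, norm_mul, norm_natCast_cpow_of_pos hn, norm_natCast, norm_prod,
    div_pow, ← Finset.prod_pow]
  simp only [hfactor, add_re, ofReal_re, mul_re, I_re, mul_zero, ofReal_im, I_im, mul_one,
    sub_self, add_zero]

lemma monotoneOn_sq_norm_GammaSeq_ratio {σ : ℝ} (hσ : σ ≤ 1 / 2) {n : ℕ} (hn : 0 < n) :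
    MonotoneOn
      (fun τ : ℝ => ‖GammaSeq (1 - σ - τ * I) n‖ ^ 2 / ‖GammaSeq (σ + τ * I) n‖ ^ 2)
      (Ici 0) := by
  have hratio (τ : ℝ) :
      ‖GammaSeq (1 - σ - τ * I) n‖ ^ 2 / ‖GammaSeq (σ + τ * I) n‖ ^ 2 =
        ((n : ℝ) ^ (1 - σ) * n !) ^ 2 / ((n : ℝ) ^ σ * n !) ^ 2 *
          ∏ j ∈ range (n + 1), ((σ + j) ^ 2 + τ ^ 2) / ((1 - σ + j) ^ 2 + τ ^ 2) := by
    rw [show (1 - σ - τ * I : ℂ) = ((1 - σ : ℝ) : ℂ) + (-τ : ℝ) * I by push_cast; ring,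
      sq_norm_GammaSeq_add_mul_I _ _ hn, sq_norm_GammaSeq_add_mul_I _ _ hn, prod_div_distrib]
    simp only [neg_sq]
    field_simp
  intro τ₁ h₁ τ₂ h₂ h₁₂
  simp only [hratio]
  refine mul_le_mul_of_nonneg_left
    (prod_le_prod (fun j _ => by positivity) fun j _ => ?_) (by positivity)
  have hj : (0 : ℝ) ≤ j := j.cast_nonneg
  exact monotoneOn_add_sq_div_add_sq (by nlinarith) (by nlinarith) h₁ h₂ h₁₂

end Complex

/-- For fixed real `σ ≤ 1/2` (avoiding the poles of `Γ`), the function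
`τ ↦ |Γ(1-σ-iτ)|²/|Γ(σ+iτ)|²` is nondecreasing on `[0, ∞)`. -/
theorem monotoneOn_abs_Gamma_ratio (σ : ℝ) (hσ : σ ≤ 1 / 2) (hpole : ∀ n : ℕ, σ ≠ -(n : ℝ)) :
    MonotoneOn
      (fun τ : ℝ =>
        ‖Complex.Gamma (1 - σ - τ * Complex.I)‖ ^ 2 /
          ‖Complex.Gamma (σ + τ * Complex.I)‖ ^ 2)
      (Set.Ici 0) := by
  have hΓ (τ : ℝ) : Gamma (σ + τ * I) ≠ 0 :=
    Gamma_ne_zero fun m h => hpole m <| by simpa using congrArg re h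
  refine monotoneOn_of_frequently_monotoneOn_of_tendsto (l := atTop)
    ((eventually_gt_atTop 0).frequently.mono fun _ => monotoneOn_sq_norm_GammaSeq_ratio hσ)
    fun τ _ => ?_
  exact ((Complex.GammaSeq_tendsto_Gamma _).norm.pow 2).div
    ((Complex.GammaSeq_tendsto_Gamma _).norm.pow 2) (pow_ne_zero 2 (norm_ne_zero_iff.2 (hΓ τ)))
end
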